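/- Let D ∈ 𝒟′_n and let D⁻ be D with the edge (v_n,v_t) deleted, where 3 ≤ t ≤ n−1 is the largest index such that (v_n,v_t) ∈ E(D). Let φ and ψ be the Perron vectors of D and D⁻, and set f_i = φ(v_i)/φ(v_n), g_i = ψ(v_i)/ψ(v_n). Then: (a) f_i = g_i for every t ≤ i ≤ n; (b) (g_{t−1}−f_{t−1})/(t−1) = 1/d⁺_D(v_n); (c) 0 < (1/d⁺_D(v_n))·(1 − 1/((t−1)(d⁺_D(v_n)−1))) ≤ (g_{t−2}−f_{t−2})/((t−1)(t−2)) ≤ 1/d⁺_D(v_n). -/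

import Mathlib

/-!
Because `v_1 → v_2 → ⋯ → v_n` is a shortest path and `d⁺(v_i) = i`, the out-neighbourhood of
`v_i` (`i < n`) is `{v_1, …, v_{i+1}} ∖ {v_i}`. Hence, for `f = φ / φ(v_n)`, the stationarity
equation at `v_j` reads `f_j = f_{j-1}/(j-1) + ∑_{j<u<n} f_u/u + [v_n → v_j]/d⁺(v_n)`, and the one
at `v_n` gives `f_{n-1} = n - 1`. Solved for `f_{j-1}`, this determines `f` downwards from
`v_{n-1}`. The digraphs `D` and `D⁻` only differ in the last term, at `j = t` and (through the
degree `d⁺(v_n) - 1` in `D⁻`) at `j = t - 1`, so `g - f` vanishes on `v_t, …, v_n` and its next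
two values are explicit.
-/

namespace PR

/-- Out-degree of `u` in the digraph on vertex set `{1,…,n} ⊆ ℕ` with adjacency `E`. -/
def outDeg (n : ℕ) (E : ℕ → ℕ → Bool) (u : ℕ) : ℕ :=
  ((Finset.Icc 1 n).filter (fun v => E u v)).card

/-- In-degree of `u`. -/
def inDeg (n : ℕ) (E : ℕ → ℕ → Bool) (u : ℕ) : ℕ :=
  ((Finset.Icc 1 n).filter (fun v => E v u)).card

/-- `E` is a simple digraph on the vertex set `{1,…,n}`: all edges join distinct
vertices of `{1,…,n}` (no loops; the `Bool`-valued adjacency precludes multi-edges). -/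
def IsDigraph (n : ℕ) (E : ℕ → ℕ → Bool) : Prop :=
  ∀ u v, E u v = true → u ∈ Finset.Icc 1 n ∧ v ∈ Finset.Icc 1 n ∧ u ≠ v

/-- `WalkLen E k u v` : there is a directed walk of length `k` from `u` to `v`. -/
def WalkLen (E : ℕ → ℕ → Bool) : ℕ → ℕ → ℕ → Prop
  | 0, u, v => u = v
  | (k+1), u, v => ∃ w, E u w = true ∧ WalkLen E k w v

/-- Every vertex reaches every other vertex by a directed walk. -/
def StronglyConnected (n : ℕ) (E : ℕ → ℕ → Bool) : Prop :=
  ∀ u ∈ Finset.Icc 1 n, ∀ v ∈ Finset.Icc 1 n, ∃ k, WalkLen E k u v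

/-- Directed distance: number of edges in a shortest directed path from `u` to `v`. -/
noncomputable def dist (E : ℕ → ℕ → Bool) (u v : ℕ) : ℕ :=
  sInf {k | WalkLen E k u v}

/-- Distance between two sets of vertices. -/
noncomputable def setDist (E : ℕ → ℕ → Bool) (A B : Set ℕ) : ℕ :=
  sInf {k | ∃ a ∈ A, ∃ b ∈ B, dist E a b = k}

/-- `φ` is the Perron vector of the simple random walk on the digraph: a positive
probability distribution on `{1,…,n}` which is stationary, i.e. `φ P = φ` where
`P(u,v) = 1/d⁺(u)` for edges `(u,v)` and `0` otherwise. -/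
def IsPerron (n : ℕ) (E : ℕ → ℕ → Bool) (φ : ℕ → ℝ) : Prop :=
  (∀ v ∈ Finset.Icc 1 n, 0 < φ v) ∧
  (∑ v ∈ Finset.Icc 1 n, φ v = 1) ∧
  (∀ v ∈ Finset.Icc 1 n, φ v =
    ∑ u ∈ Finset.Icc 1 n, if E u v then φ u / (outDeg n E u : ℝ) else 0)

/-- The principal ratio `γ = (max_u φ(u)) / (min_u φ(u))` of a vector `φ` on `{1,…,n}`. -/
noncomputable def pratio (n : ℕ) (φ : ℕ → ℝ) : ℝ :=
  if h : (Finset.Icc 1 n).Nonempty then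
    ((Finset.Icc 1 n).sup' h φ) / ((Finset.Icc 1 n).inf' h φ)
  else 0

/-- Vertices attaining the maximum of `φ`. -/
def Vmax (n : ℕ) (φ : ℕ → ℝ) : Set ℕ :=
  {v | v ∈ Finset.Icc 1 n ∧ ∀ u ∈ Finset.Icc 1 n, φ u ≤ φ v}

/-- Vertices attaining the minimum of `φ`. -/
def Vmin (n : ℕ) (φ : ℕ → ℝ) : Set ℕ :=
  {v | v ∈ Finset.Icc 1 n ∧ ∀ u ∈ Finset.Icc 1 n, φ v ≤ φ u}

/-- Membership in the family `𝒟′_n` (together with the Perron vector `φ` of `D`). -/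
def memDn' (n : ℕ) (E : ℕ → ℕ → Bool) (φ : ℕ → ℝ) : Prop :=
  IsDigraph n E ∧ StronglyConnected n E ∧ IsPerron n E φ ∧
  -- (i) v_1, v_2, …, v_n is a shortest directed path from v_1 to v_n, of length n-1
  (∀ i, 1 ≤ i → i < n → E i (i+1) = true) ∧ dist E 1 n = n - 1 ∧
  -- (ii) d⁺(v_i) = i for every 2 ≤ i ≤ n-1
  (∀ i, 2 ≤ i → i ≤ n - 1 → outDeg n E i = i) ∧
  -- (iii) v_2 ∈ V_max, v_n ∈ V_min, dist(V_max,V_min) = dist(v_2,v_n) = n-2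
  (2:ℕ) ∈ Vmax n φ ∧ n ∈ Vmin n φ ∧
  setDist E (Vmax n φ) (Vmin n φ) = n - 2 ∧ dist E 2 n = n - 2 ∧
  -- (iv) d⁺(v_n) ≥ 2
  2 ≤ outDeg n E n ∧
  -- (v) N⁺(v_n) ≠ {v_1, v_2}
  ¬ (∀ v, E n v = true ↔ (v = 1 ∨ v = 2))

open Finset

theorem WalkLen.append {E : ℕ → ℕ → Bool} {k l u v w : ℕ}
    (h₁ : WalkLen E k u v) (h₂ : WalkLen E l v w) : WalkLen E (k + l) u w := by
  induction k generalizing u with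
  | zero => cases h₁; simpa using h₂
  | succ k ih =>
    obtain ⟨x, hx, h⟩ := h₁
    rw [Nat.add_right_comm]
    exact ⟨x, hx, ih h⟩

theorem IsDigraph.edge_self_eq_false {n : ℕ} {E : ℕ → ℕ → Bool} (hE : IsDigraph n E) (u : ℕ) :
    E u u = false :=
  Bool.eq_false_iff.2 fun h => (hE u u h).2.2 rfl

theorem outDeg_congr {n u : ℕ} {E E' : ℕ → ℕ → Bool} (h : ∀ v, E' u v = E u v) :
    outDeg n E' u = outDeg n E u := by
  simp only [outDeg, h]

def deleteEdge (E : ℕ → ℕ → Bool) (a b : ℕ) : ℕ → ℕ → Bool :=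
  fun u v => E u v && !(u == a && v == b)

theorem deleteEdge_of_ne {E : ℕ → ℕ → Bool} {a b u : ℕ} (hu : u ≠ a) (v : ℕ) :
    deleteEdge E a b u v = E u v := by
  simp [deleteEdge, hu]

theorem deleteEdge_self_of_ne {E : ℕ → ℕ → Bool} {a b v : ℕ} (hv : v ≠ b) :
    deleteEdge E a b a v = E a v := by
  simp [deleteEdge, hv]

theorem deleteEdge_self_self (E : ℕ → ℕ → Bool) (a b : ℕ) : deleteEdge E a b a b = false := by
  simp [deleteEdge]

theorem outDeg_deleteEdge {n a b : ℕ} {E : ℕ → ℕ → Bool} (hab : E a b = true)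
    (hb : b ∈ Icc 1 n) : outDeg n (deleteEdge E a b) a = outDeg n E a - 1 := by
  have : (Icc 1 n).filter (deleteEdge E a b a ·) = ((Icc 1 n).filter (E a ·)).erase b := by
    ext v
    by_cases hv : v = b
    · simp [hv, deleteEdge_self_self]
    · simp [hv, deleteEdge_self_of_ne hv]
  rw [outDeg, this, card_erase_of_mem (mem_filter.2 ⟨hb, hab⟩), outDeg]

/-- Conditions (i) and (ii) of `𝒟′_n`. They force `N⁺(v_i) = {v_1, …, v_{i+1}} ∖ {v_i}` for
every `i < n` (`IsStaircase.filter_edge_eq`). -/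
structure IsStaircase (n : ℕ) (E : ℕ → ℕ → Bool) : Prop where
  isDigraph : IsDigraph n E
  edge_succ : ∀ i, 1 ≤ i → i < n → E i (i + 1) = true
  dist_eq : dist E 1 n = n - 1
  outDeg_eq : ∀ i, 2 ≤ i → i ≤ n - 1 → outDeg n E i = i

namespace IsStaircase

variable {n : ℕ} {E E' : ℕ → ℕ → Bool} {φ : ℕ → ℝ}

theorem walkLen (hE : IsStaircase n E) {a b : ℕ} (ha : 1 ≤ a) (hab : a ≤ b) (hb : b ≤ n) :
    WalkLen E (b - a) a b := by
  induction b, hab using Nat.le_induction with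
  | base => simp [WalkLen]
  | succ b hab ih =>
    rw [Nat.sub_add_comm hab]
    exact (ih (by omega)).append ⟨b + 1, hE.edge_succ b (by omega) (by omega), rfl⟩

theorem le_succ_of_edge (hE : IsStaircase n E) {i j : ℕ} (hij : E i j = true) : j ≤ i + 1 := by
  obtain ⟨hiI, hjI, -⟩ := hE.isDigraph i j hij
  rw [mem_Icc] at hiI hjI
  by_contra! h
  have hij' : WalkLen E 1 i j := ⟨j, hij, rfl⟩
  have hwalk := ((hE.walkLen le_rfl hiI.1 hiI.2).append hij').append (hE.walkLen hjI.1 hjI.2 le_rfl)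
  have : dist E 1 n ≤ _ := Nat.sInf_le hwalk
  rw [hE.dist_eq] at this
  omega

theorem filter_edge_eq (hE : IsStaircase n E) {u : ℕ} (hu : 1 ≤ u) (hun : u < n) :
    (Icc 1 n).filter (E u ·) = (Icc 1 (u + 1)).erase u := by
  have hsub : (Icc 1 n).filter (E u ·) ⊆ (Icc 1 (u + 1)).erase u := by
    intro v hv
    rw [mem_filter] at hv
    have hne := (hE.isDigraph u v hv.2).2.2
    have := hE.le_succ_of_edge hv.2
    simp only [mem_erase, mem_Icc] at hv ⊢
    omega
  refine eq_of_subset_of_card_le hsub ?_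
  rw [card_erase_of_mem (by simp only [mem_Icc]; omega), Nat.card_Icc, Nat.add_sub_cancel]
  rcases (show u = 1 ∨ 2 ≤ u by omega) with rfl | hu2
  · exact card_pos.2 ⟨2, mem_filter.2 ⟨by simp only [mem_Icc]; omega, hE.edge_succ 1 le_rfl hun⟩⟩
  · exact (hE.outDeg_eq u hu2 (by omega)).ge

theorem edge_iff (hE : IsStaircase n E) {u v : ℕ} (hu : 1 ≤ u) (hun : u < n) :
    E u v = true ↔ 1 ≤ v ∧ v ≤ u + 1 ∧ v ≠ u := by
  calc E u v = true ↔ v ∈ (Icc 1 n).filter (E u ·) := by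
        rw [mem_filter]
        exact (and_iff_right_of_imp fun h => (hE.isDigraph u v h).2.1).symm
    _ ↔ _ := by
        rw [hE.filter_edge_eq hu hun]
        simp only [mem_erase, mem_Icc]
        tauto

theorem outDeg_eq_self (hE : IsStaircase n E) {u : ℕ} (hu : 1 ≤ u) (hun : u < n) :
    outDeg n E u = u := by
  rw [outDeg, hE.filter_edge_eq hu hun, card_erase_of_mem (by simp only [mem_Icc]; omega),
    Nat.card_Icc]
  omega

theorem perron_apply (hE : IsStaircase n E) (hE' : ∀ u, u ≠ n → ∀ v, E' u v = E u v)
    (hφ : IsPerron n E' φ) {v : ℕ} (hv : 2 ≤ v) (hvn : v ≤ n) :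
    φ v = ∑ u ∈ (Icc 1 (n - 1)).filter (fun u => u + 1 = v ∨ v < u), φ u / u +
      if E' n v then φ n / outDeg n E' n else 0 := by
  obtain ⟨n, rfl⟩ : ∃ k, n = k + 1 := ⟨n - 1, by omega⟩
  rw [hφ.2.2 v (by simp only [mem_Icc]; omega), sum_Icc_succ_top (by omega), Nat.add_sub_cancel,
    sum_filter]
  congr 1
  refine sum_congr rfl fun u hu => ?_
  rw [mem_Icc] at hu
  rw [hE' u (by omega), outDeg_congr (hE' u (by omega)), hE.outDeg_eq_self hu.1 (by omega)]
  exact if_congr (by rw [hE.edge_iff hu.1 (by omega)]; omega) rfl rfl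

theorem perron_of_lt (hE : IsStaircase n E) (hE' : ∀ u, u ≠ n → ∀ v, E' u v = E u v)
    (hφ : IsPerron n E' φ) {v : ℕ} (hv : 2 ≤ v) (hvn : v ≤ n - 1) :
    φ v = φ (v - 1) / ((v : ℝ) - 1) + ∑ u ∈ Icc (v + 1) (n - 1), φ u / u +
      if E' n v then φ n / outDeg n E' n else 0 := by
  have hfilter : (Icc 1 (n - 1)).filter (fun u => u + 1 = v ∨ v < u) =
      insert (v - 1) (Icc (v + 1) (n - 1)) := by
    ext u
    simp only [mem_filter, mem_Icc, mem_insert]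
    omega
  rw [hE.perron_apply hE' hφ hv (by omega), hfilter, sum_insert (by simp only [mem_Icc]; omega),
    Nat.cast_pred (by omega)]

theorem div_perron_last (hE : IsStaircase n E) (hE' : ∀ u, u ≠ n → ∀ v, E' u v = E u v)
    (hloop : E' n n = false) (hφ : IsPerron n E' φ) (hn : 3 ≤ n) :
    φ (n - 1) / φ n = (n : ℝ) - 1 := by
  have hfilter : (Icc 1 (n - 1)).filter (fun u => u + 1 = n ∨ n < u) = {n - 1} := by
    ext u
    simp only [mem_filter, mem_Icc, mem_singleton]
    omega
  have hlast := hE.perron_apply hE' hφ (by omega) le_rfl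
  rw [hfilter, sum_singleton, hloop, Nat.cast_pred (by omega), if_neg Bool.false_ne_true,
    add_zero] at hlast
  have hpos : 0 < φ (n - 1) := hφ.1 _ (by simp only [mem_Icc]; omega)
  rw [hlast, div_div_cancel₀ hpos.ne']

end IsStaircase

/-- The stationarity equations of a staircase digraph at `v_2, …, v_{n-1}`, divided by `φ(v_n)`;
`c v` is the contribution of the edge `(v_n, v)`. -/
def StationaryRecurrence (n : ℕ) (c f : ℕ → ℝ) : Prop :=
  ∀ v, 2 ≤ v → v ≤ n - 1 →
    f v = f (v - 1) / ((v : ℝ) - 1) + ∑ u ∈ Icc (v + 1) (n - 1), f u / u + c v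

theorem IsStaircase.stationaryRecurrence {n : ℕ} {E E' : ℕ → ℕ → Bool} {φ : ℕ → ℝ}
    (hE : IsStaircase n E) (hE' : ∀ u, u ≠ n → ∀ v, E' u v = E u v) (hφ : IsPerron n E' φ) :
    StationaryRecurrence n (fun v => if E' n v then (outDeg n E' n : ℝ)⁻¹ else 0)
      (fun i => φ i / φ n) := by
  intro v hv hvn
  have hφn : φ n ≠ 0 := (hφ.1 n (by simp only [mem_Icc]; omega)).ne'
  beta_reduce
  rw [hE.perron_of_lt hE' hφ hv hvn, add_div, add_div, sum_div, div_right_comm, ite_div,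
    div_div_cancel_left' hφn, zero_div]
  simp only [div_right_comm _ (φ n)]

namespace StationaryRecurrence

variable {n t : ℕ} {c c' f g : ℕ → ℝ}

theorem sub (hf : StationaryRecurrence n c f) (hg : StationaryRecurrence n c' g) :
    StationaryRecurrence n (c - c') (f - g) := by
  intro v hv hvn
  simp only [Pi.sub_apply, hf v hv hvn, hg v hv hvn, sub_div, sum_sub_distrib]
  ring

theorem apply_pred (h : StationaryRecurrence n c f) {v : ℕ} (hv : 2 ≤ v) (hvn : v ≤ n - 1) :
    f (v - 1) = ((v : ℝ) - 1) * (f v - ∑ u ∈ Icc (v + 1) (n - 1), f u / u - c v) := by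
  have : (v : ℝ) - 1 ≠ 0 := by
    have : (2 : ℝ) ≤ v := by exact_mod_cast hv
    linarith
  rw [h v hv hvn]
  field_simp
  ring

theorem eq_zero_of_le (h : StationaryRecurrence n c f) (htop : f (n - 1) = 0)
    (hc : ∀ v, t < v → v ≤ n - 1 → c v = 0) (ht : 1 ≤ t) :
    ∀ m, t ≤ m → m ≤ n - 1 → f m = 0 := by
  suffices ∀ k m, t ≤ m → n - 1 - k ≤ m → m ≤ n - 1 → f m = 0 from
    fun m hm hmn => this (n - 1) m hm (by omega) hmn
  intro k
  induction k with
  | zero => intro m _ h₁ h₂; rwa [show m = n - 1 by omega]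
  | succ k ih =>
    intro m hm h₁ h₂
    by_cases hmk : n - 1 - k ≤ m
    · exact ih m hm hmk h₂
    have hsum : ∑ u ∈ Icc (m + 1 + 1) (n - 1), f u / u = 0 :=
      sum_eq_zero fun u hu => by rw [mem_Icc] at hu; rw [ih u (by omega) (by omega) hu.2, zero_div]
    have := h.apply_pred (v := m + 1) (by omega) (by omega)
    rwa [Nat.add_sub_cancel, ih (m + 1) (by omega) (by omega) (by omega), hsum,
      hc (m + 1) (by omega) (by omega), sub_zero, sub_zero, mul_zero] at this

theorem apply_pred_of_eq_zero (h : StationaryRecurrence n c f)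
    (hzero : ∀ u, t ≤ u → u ≤ n - 1 → f u = 0) (ht : 2 ≤ t) (htn : t ≤ n - 1) :
    f (t - 1) = -((t : ℝ) - 1) * c t := by
  have hsum : ∑ u ∈ Icc (t + 1) (n - 1), f u / u = 0 :=
    sum_eq_zero fun u hu => by rw [mem_Icc] at hu; rw [hzero u (by omega) hu.2, zero_div]
  rw [h.apply_pred ht htn, hzero t le_rfl htn, hsum]
  ring

theorem apply_sub_two_of_eq_zero (h : StationaryRecurrence n c f)
    (hzero : ∀ u, t ≤ u → u ≤ n - 1 → f u = 0) (ht : 3 ≤ t) (htn : t ≤ n - 1) :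
    f (t - 2) = ((t : ℝ) - 2) * (f (t - 1) - c (t - 1)) := by
  have hsum : ∑ u ∈ Icc t (n - 1), f u / u = 0 :=
    sum_eq_zero fun u hu => by rw [mem_Icc] at hu; rw [hzero u hu.1 hu.2, zero_div]
  have := h.apply_pred (v := t - 1) (by omega) (by omega)
  rw [Nat.sub_add_cancel (by omega), Nat.sub_sub, hsum, Nat.cast_pred (by omega), sub_zero,
    sub_sub] at this
  simpa only [one_add_one_eq_two] using this

end StationaryRecurrence

theorem bounds_of_eq_mul_sub {t d e x : ℝ} (ht : 3 ≤ t) (hd : 2 ≤ d)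
    (he : e = 0 ∨ e = (d - 1)⁻¹ - d⁻¹) (hx : x = (t - 2) * ((t - 1) * d⁻¹ - e)) :
    0 < 1 / d * (1 - 1 / ((t - 1) * (d - 1))) ∧
      1 / d * (1 - 1 / ((t - 1) * (d - 1))) ≤ x / ((t - 1) * (t - 2)) ∧
      x / ((t - 1) * (t - 2)) ≤ 1 / d := by
  have ht1 : 0 < t - 1 := by linarith
  have ht2 : 0 < t - 2 := by linarith
  have hd0 : 0 < d := by linarith
  have hd1 : 0 < d - 1 := by linarith
  have hδ : 0 < 1 / (d * (d - 1) * (t - 1)) := by positivity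
  have hmid : x / ((t - 1) * (t - 2)) = 1 / d - e / (t - 1) := by
    rw [hx]
    field_simp
  have hlow : 1 / d * (1 - 1 / ((t - 1) * (d - 1))) = 1 / d - 1 / (d * (d - 1) * (t - 1)) := by
    field_simp
  have hδd : 1 / (d * (d - 1) * (t - 1)) < 1 / d := by
    have : 1 < (d - 1) * (t - 1) := by nlinarith
    rw [mul_assoc]
    exact one_div_lt_one_div_of_lt hd0 (lt_mul_of_one_lt_right hd0 this)
  rw [hmid, hlow]
  rcases he with rfl | rfl
  · simp only [zero_div, sub_zero]
    exact ⟨by linarith, by linarith, le_rfl⟩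
  · have : ((d - 1)⁻¹ - d⁻¹) / (t - 1) = 1 / (d * (d - 1) * (t - 1)) := by
      field_simp
      ring
    rw [this]
    exact ⟨by linarith, le_rfl, by linarith⟩

/-- Proposition 11 (a),(b),(c): comparison of the normalized Perron vectors of
`D ∈ 𝒟′_n` and `D⁻ = D - (v_n,v_t)`. -/
theorem stmt11 (n t : ℕ) (E : ℕ → ℕ → Bool) (φ ψ : ℕ → ℝ)
    (hD : memDn' n E φ)
    (ht3 : 3 ≤ t) (htn : t ≤ n - 1) (hedge : E n t = true)
    (htmax : ∀ t', t < t' → t' ≤ n - 1 → E n t' = false)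
    (hψ : IsPerron n (fun u v => E u v && !(u == n && v == t)) ψ) :
    -- (a)
    (∀ i, t ≤ i → i ≤ n → ψ i / ψ n = φ i / φ n) ∧
    -- (b)
    (ψ (t-1) / ψ n - φ (t-1) / φ n) / ((t : ℝ) - 1) = 1 / (outDeg n E n : ℝ) ∧
    -- (c)
    (0 < (1 / (outDeg n E n : ℝ)) *
        (1 - 1 / (((t : ℝ) - 1) * ((outDeg n E n : ℝ) - 1))) ∧
      (1 / (outDeg n E n : ℝ)) *
        (1 - 1 / (((t : ℝ) - 1) * ((outDeg n E n : ℝ) - 1))) ≤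
        (ψ (t-2) / ψ n - φ (t-2) / φ n) / (((t : ℝ) - 1) * ((t : ℝ) - 2)) ∧
      (ψ (t-2) / ψ n - φ (t-2) / φ n) / (((t : ℝ) - 1) * ((t : ℝ) - 2)) ≤
        1 / (outDeg n E n : ℝ)) := by
  obtain ⟨hDig, -, hφ, hpath, hdist, hdeg, -, -, -, -, hd2, -⟩ := hD
  have hE : IsStaircase n E := ⟨hDig, hpath, hdist, hdeg⟩
  have hψ' : IsPerron n (deleteEdge E n t) ψ := hψ
  have hE' : ∀ u, u ≠ n → ∀ v, deleteEdge E n t u v = E u v := fun _ hu => deleteEdge_of_ne hu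
  have hrec :=
    (hE.stationaryRecurrence hE' hψ').sub (hE.stationaryRecurrence (fun _ _ _ => rfl) hφ)
  have htop := (hE.div_perron_last hE'
    (by rw [deleteEdge_self_of_ne (by omega), hDig.edge_self_eq_false]) hψ' (by omega)).trans
    (hE.div_perron_last (fun _ _ _ => rfl) (hDig.edge_self_eq_false n) hφ (by omega)).symm
  have hzero := hrec.eq_zero_of_le (t := t) (sub_eq_zero.2 htop)
    (fun v hv hvn => by simp [deleteEdge, htmax v hv hvn]) (by omega)
  have ha (i : ℕ) (hi : t ≤ i) (hin : i ≤ n) : ψ i / ψ n = φ i / φ n := by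
    rcases hin.lt_or_eq with hin | rfl
    · exact sub_eq_zero.1 (hzero i hi (by omega))
    · have hi : i ∈ Icc 1 i := by simp only [mem_Icc]; omega
      rw [div_self (hψ.1 i hi).ne', div_self (hφ.1 i hi).ne']
  have hb : ψ (t - 1) / ψ n - φ (t - 1) / φ n = ((t : ℝ) - 1) * (outDeg n E n : ℝ)⁻¹ := by
    have := hrec.apply_pred_of_eq_zero hzero (by omega) htn
    simp only [Pi.sub_apply, deleteEdge_self_self, hedge, Bool.false_eq_true, if_false, if_true]
      at this
    rw [this]
    ring
  have hd : (outDeg n (deleteEdge E n t) n : ℝ) = (outDeg n E n : ℝ) - 1 := by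
    rw [outDeg_deleteEdge hedge (by simp only [mem_Icc]; omega), Nat.cast_pred (by omega)]
  have hc := hrec.apply_sub_two_of_eq_zero hzero ht3 htn
  simp only [Pi.sub_apply, hb, deleteEdge_self_of_ne (show t - 1 ≠ t by omega), hd] at hc
  have ht1 : (t : ℝ) - 1 ≠ 0 := by
    have : (3 : ℝ) ≤ t := by exact_mod_cast ht3
    linarith
  exact ⟨ha, by rw [hb]; field_simp, bounds_of_eq_mul_sub (by exact_mod_cast ht3)
    (by exact_mod_cast hd2) (by cases E n (t - 1) <;> simp) hc⟩

end PR
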